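/- Let a < b be real numbers and let f : ℝ → ℝ be continuously differentiable on [a,b]. Then f is monotone decreasing on [a,b] if and only if D^α_{*a} f(t) ≤ 0 for all t ∈ [a,b] and all α ∈ (0,1). -/

import Mathlib

/-!
If `f` is antitone then `f' ≤ 0` on `(a, b)`, and the Caputo integrand is a nonnegative kernel
times `f'`. Conversely, if `f'(c) > 0` at an interior point, then `f' ≥ f'(c)/2` on some
`[u, c]`; as `α → 1⁻` the kernel `(c - s)^(-α)` has mass `(c - u)^(1-α)/(1-α) → ∞` on `[u, c]`
but stays bounded on `[a, u]`, so `D^α_{*a} f(c) > 0` for `α` close to `1`.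
-/

/-- The Caputo fractional derivative of order `α` with starting point `a`:
`D^α_{*a} f(t) = (1/Γ(1-α)) ∫_a^t (t-s)^(-α) f'(s) ds`. -/
noncomputable def caputoDeriv (a α : ℝ) (f : ℝ → ℝ) (t : ℝ) : ℝ :=
  (Real.Gamma (1 - α))⁻¹ * ∫ s in a..t, (t - s) ^ (-α) * deriv f s

open Set Filter Topology MeasureTheory intervalIntegral

section Kernel

variable {α a b t u m M : ℝ} {g : ℝ → ℝ}

lemma intervalIntegrable_sub_rpow_neg (hα : α < 1) (t a b : ℝ) :
    IntervalIntegrable (fun s ↦ (t - s) ^ (-α)) volume a b := by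
  simpa using (intervalIntegrable_rpow' (by linarith : (-1 : ℝ) < -α)
    (a := t - a) (b := t - b)).comp_sub_left t

lemma integral_sub_rpow_neg (hα : α < 1) (u t : ℝ) :
    ∫ s in u..t, (t - s) ^ (-α) = (t - u) ^ (1 - α) / (1 - α) := by
  rw [integral_comp_sub_left (fun y ↦ y ^ (-α)) t, sub_self,
    integral_rpow (Or.inl (by linarith)), Real.zero_rpow (by linarith)]
  ring_nf

lemma intervalIntegrable_sub_rpow_neg_mul (hα : α < 1) (hab : a ≤ b) (hg : Measurable g)
    (hgM : ∀ s ∈ Ioc a b, |g s| ≤ M) :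
    IntervalIntegrable (fun s ↦ (t - s) ^ (-α) * g s) volume a b := by
  rw [intervalIntegrable_iff_integrableOn_Ioc_of_le hab]
  exact (intervalIntegrable_sub_rpow_neg hα t a b).1.mul_bdd hg.aestronglyMeasurable
    ((ae_restrict_mem measurableSet_Ioc).mono hgM)

lemma mul_integral_sub_rpow_neg_le (hα : α < 1) (hut : u ≤ t) (hgm : ∀ s ∈ Ioo u t, m ≤ g s)
    (hg : IntervalIntegrable (fun s ↦ (t - s) ^ (-α) * g s) volume u t) :
    m * ((t - u) ^ (1 - α) / (1 - α)) ≤ ∫ s in u..t, (t - s) ^ (-α) * g s := by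
  rw [← integral_sub_rpow_neg hα, ← intervalIntegral.integral_const_mul]
  refine integral_mono_on_of_le_Ioo hut
    ((intervalIntegrable_sub_rpow_neg hα t u t).const_mul m) hg fun s hs ↦ ?_
  rw [mul_comm]
  exact mul_le_mul_of_nonneg_left (hgm s hs) (Real.rpow_nonneg (by linarith [hs.2]) _)

lemma abs_integral_sub_rpow_neg_mul_le (hα : 0 ≤ α) (hau : a ≤ u) (hut : u < t)
    (hgM : ∀ s ∈ Ioc a t, |g s| ≤ M) :
    |∫ s in a..u, (t - s) ^ (-α) * g s| ≤ (t - u) ^ (-α) * M * (u - a) := by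
  have := norm_integral_le_of_norm_le_const (a := a) (b := u)
    (f := fun s ↦ (t - s) ^ (-α) * g s) (C := (t - u) ^ (-α) * M) fun s hs ↦ by
      rw [uIoc_of_le hau] at hs
      rw [norm_mul, Real.norm_of_nonneg (Real.rpow_nonneg (by linarith [hs.2]) _)]
      exact mul_le_mul (Real.rpow_le_rpow_of_nonpos (by linarith) (by linarith [hs.2])
        (by linarith)) (hgM s ⟨hs.1, hs.2.trans hut.le⟩) (abs_nonneg _)
        (Real.rpow_nonneg (by linarith) _)
  rwa [abs_of_nonneg (sub_nonneg.2 hau)] at this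

lemma tendsto_one_sub_inv_nhdsLT_one :
    Tendsto (fun α : ℝ ↦ (1 - α)⁻¹) (𝓝[<] 1) atTop := by
  refine tendsto_inv_nhdsGT_zero.comp (tendsto_nhdsWithin_of_tendsto_nhds_of_eventually_within _
    ?_ (eventually_nhdsWithin_of_forall fun α (hα : α < 1) ↦ sub_pos.2 hα))
  simpa using (tendsto_const_nhds (x := (1 : ℝ)).sub tendsto_id).mono_left
    (nhdsWithin_le_nhds (a := (1 : ℝ)) (s := Iio 1))

lemma eventually_integral_sub_rpow_neg_mul_pos (hau : a ≤ u) (hut : u < t) (hm : 0 < m)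
    (hg : Measurable g) (hgm : ∀ s ∈ Ioo u t, m ≤ g s) (hgM : ∀ s ∈ Ioc a t, |g s| ≤ M) :
    ∀ᶠ α : ℝ in 𝓝[<] 1, 0 < ∫ s in a..t, (t - s) ^ (-α) * g s := by
  have hcont : Continuous fun x : ℝ ↦ (t - u) ^ x := Real.continuous_const_rpow (by linarith)
  have hlim : Tendsto (fun α ↦ -((t - u) ^ (-α) * M * (u - a)) +
      m * (t - u) ^ (1 - α) * (1 - α)⁻¹) (𝓝[<] 1) atTop := by
    refine Tendsto.add_atTop (C := -((t - u) ^ (-1 : ℝ) * M * (u - a))) ?_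
      (Tendsto.pos_mul_atTop (C := m) hm ?_ tendsto_one_sub_inv_nhdsLT_one)
    · exact ((((hcont.comp continuous_neg).mul_const M).mul_const _).neg.tendsto 1).mono_left
        nhdsWithin_le_nhds
    · simpa using ((hcont.comp (continuous_sub_left 1)).const_mul m).tendsto 1 |>.mono_left
        nhdsWithin_le_nhds
  filter_upwards [hlim.eventually_gt_atTop 0, Ioo_mem_nhdsLT zero_lt_one] with α hpos hα
  have hint_far := intervalIntegrable_sub_rpow_neg_mul (t := t) hα.2 hau hg
    fun s hs ↦ hgM s ⟨hs.1, hs.2.trans hut.le⟩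
  have hint_near := intervalIntegrable_sub_rpow_neg_mul (t := t) hα.2 hut.le hg
    fun s hs ↦ hgM s ⟨hau.trans_lt hs.1, hs.2⟩
  have hfar := abs_integral_sub_rpow_neg_mul_le hα.1.le hau hut hgM
  have hnear := mul_integral_sub_rpow_neg_le hα.2 hut.le hgm hint_near
  rw [← integral_add_adjacent_intervals hint_far hint_near]
  rw [mul_div_assoc', div_eq_mul_inv] at hnear
  linarith [neg_abs_le (∫ s in a..u, (t - s) ^ (-α) * g s)]

end Kernel

section Caputo

variable {f : ℝ → ℝ} {a b c t α : ℝ}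

lemma caputoDeriv_nonpos_of_antitoneOn (hA : AntitoneOn f (Icc a b)) (ht : t ∈ Icc a b)
    (hα : α < 1) : caputoDeriv a α f t ≤ 0 := by
  refine mul_nonpos_of_nonneg_of_nonpos (inv_nonneg.2 (Real.Gamma_pos_of_pos (by linarith)).le) ?_
  rw [integral_of_le ht.1, integral_Ioc_eq_integral_Ioo]
  refine setIntegral_nonpos measurableSet_Ioo fun s hs ↦ mul_nonpos_of_nonneg_of_nonpos
    (Real.rpow_nonneg (by linarith [hs.2]) _) ?_
  rw [← derivWithin_of_mem_nhds (Icc_mem_nhds hs.1 (hs.2.trans_le ht.2))]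
  exact hA.derivWithin_nonpos

lemma ContDiffOn.exists_abs_deriv_le (hab : a < b) (hf : ContDiffOn ℝ 1 f (Icc a b)) :
    ∃ M, ∀ s ∈ Ioo a b, |deriv f s| ≤ M := by
  obtain ⟨M, hM⟩ := isCompact_Icc.exists_bound_of_continuousOn
    (hf.continuousOn_derivWithin (uniqueDiffOn_Icc hab) le_rfl)
  refine ⟨M, fun s hs ↦ ?_⟩
  rw [← derivWithin_of_mem_nhds (Icc_mem_nhds hs.1 hs.2)]
  exact hM s (Ioo_subset_Icc_self hs)

lemma exists_caputoDeriv_pos_of_deriv_pos (hf : ContDiffOn ℝ 1 f (Icc a b)) (hc : c ∈ Ioo a b)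
    (hpos : 0 < deriv f c) : ∃ α ∈ Ioo (0 : ℝ) 1, 0 < caputoDeriv a α f c := by
  obtain ⟨M, hM⟩ := hf.exists_abs_deriv_le (hc.1.trans hc.2)
  have hcont : ContinuousAt (deriv f) c :=
    ((hf.mono Ioo_subset_Icc_self).continuousOn_deriv_of_isOpen isOpen_Ioo le_rfl).continuousAt
      (isOpen_Ioo.mem_nhds hc)
  obtain ⟨u, hu, hsub⟩ := (mem_nhdsLT_iff_exists_mem_Ico_Ioo_subset hc.1).1 <|
    nhdsWithin_le_nhds (hcont.eventually (lt_mem_nhds (half_lt_self hpos)))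
  obtain ⟨α, hα_pos, hα⟩ := ((eventually_integral_sub_rpow_neg_mul_pos hu.1 hu.2
    (half_pos hpos) (measurable_deriv f) (fun s hs ↦ (hsub hs).le)
    fun s hs ↦ hM s ⟨hs.1, hs.2.trans_lt hc.2⟩).and (Ioo_mem_nhdsLT zero_lt_one)).exists
  exact ⟨α, hα, mul_pos (inv_pos.2 (Real.Gamma_pos_of_pos (sub_pos.2 hα.2))) hα_pos⟩

end Caputo

theorem antitoneOn_iff_caputo_nonpos_general (a b : ℝ) (f : ℝ → ℝ)
    (hf : ContDiffOn ℝ 1 f (Set.Icc a b)) :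
    AntitoneOn f (Set.Icc a b) ↔
      ∀ t ∈ Set.Icc a b, ∀ α ∈ Set.Ioo (0 : ℝ) 1, caputoDeriv a α f t ≤ 0 := by
  refine ⟨fun hA t ht α hα ↦ caputoDeriv_nonpos_of_antitoneOn hA ht hα.2, fun H ↦ ?_⟩
  refine antitoneOn_of_deriv_nonpos (convex_Icc a b) hf.continuousOn
    ((hf.differentiableOn one_ne_zero).mono interior_subset) fun c hc ↦ ?_
  rw [interior_Icc] at hc
  by_contra! hpos
  obtain ⟨α, hα, hα_pos⟩ := exists_caputoDeriv_pos_of_deriv_pos hf hc hpos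
  exact (H c (Ioo_subset_Icc_self hc) α hα).not_gt hα_pos

theorem antitoneOn_iff_caputo_nonpos (a b : ℝ) (hab : a < b) (f : ℝ → ℝ)
    (hf : ContDiffOn ℝ 1 f (Set.Icc a b)) :
    AntitoneOn f (Set.Icc a b) ↔
      ∀ t ∈ Set.Icc a b, ∀ α ∈ Set.Ioo (0 : ℝ) 1, caputoDeriv a α f t ≤ 0 :=
  antitoneOn_iff_caputo_nonpos_general a b f hf
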